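/- Let 1/2 < α < 1, γ > 0 and t > 0. Then (γ / Γ(2α−1)) · ∫₀ᵗ (t−s)^{2α−2} · E_{2α−1}(γ s^{2α−1}) ds ≤ E_{2α−1}(γ t^{2α−1}), where the integral is the (interval) Lebesgue integral over s ∈ (0, t). -/

import Mathlib

/-!
Expanding `E_β` into its power series, each term integrates to a Beta integral,
`∫₀ᵗ (t - s)^(β-1) s^(kβ) ds = Γ(β) Γ(kβ + 1) / Γ((k + 1)β + 1) · t^((k+1)β)`, so that the
series for `(γ / Γ(β)) ∫₀ᵗ (t - s)^(β-1) E_β(γ s^β) ds` is the series for `E_β(γ t^β)` with its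
constant term `1` removed. Integration term by term is justified by absolute convergence of the
series, which follows from the ratio test and the bound `Γ(x) (x - 1)^β ≤ Γ(x + β)` given by
log-convexity of `Γ`.
-/

noncomputable def mittagLeffler (β z : ℝ) : ℝ :=
  ∑' k : ℕ, z ^ k / Real.Gamma ((k : ℝ) * β + 1)

open Real MeasureTheory Set Filter

theorem Real.Gamma_mul_sub_one_rpow_le_Gamma_add {x β : ℝ} (hx : 1 < x) (hβ : 0 < β) :
    Gamma x * (x - 1) ^ β ≤ Gamma (x + β) := by
  have hx₀ : 0 < x - 1 := by linarith
  have hΓ₀ : 0 < Gamma (x - 1) := Gamma_pos_of_pos hx₀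
  have hΓβ : 0 < Gamma (x + β) := Gamma_pos_of_pos (by linarith)
  have hΓ : Gamma x = (x - 1) * Gamma (x - 1) := by
    simpa using Gamma_add_one hx₀.ne'
  -- log-convexity: the slope of `log ∘ Γ` over `[x - 1, x]`, which is `log (x - 1)`,
  -- is at most its slope over `[x, x + β]`
  have hslope := convexOn_log_Gamma.slope_mono_adjacent (x := x - 1) (y := x) (z := x + β)
    hx₀ (by simp only [mem_Ioi]; linarith) (by linarith) (by linarith)
  simp only [Function.comp_apply, sub_sub_cancel, div_one, add_sub_cancel_left] at hslope
  rw [hΓ, log_mul hx₀.ne' hΓ₀.ne', add_sub_cancel_right, le_div_iff₀ hβ] at hslope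
  rw [hΓ, ← log_le_log_iff (by positivity) hΓβ, log_mul (by positivity) (by positivity),
    log_rpow hx₀, log_mul hx₀.ne' hΓ₀.ne']
  linarith

theorem summable_pow_div_Gamma_mul_add {β : ℝ} (hβ : 0 < β) (c z : ℝ) :
    Summable fun k : ℕ => z ^ k / Gamma (k * β + c) := by
  refine summable_of_ratio_norm_eventually_le (r := 1 / 2) (by norm_num) ?_
  have hx : Tendsto (fun k : ℕ => (k : ℝ) * β + c) atTop atTop :=
    tendsto_atTop_add_const_right _ c (tendsto_natCast_atTop_atTop.atTop_mul_const hβ)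
  have hpow : Tendsto (fun k : ℕ => ((k : ℝ) * β + c - 1) ^ β) atTop atTop :=
    (tendsto_rpow_atTop hβ).comp (tendsto_atTop_add_const_right _ (-1) hx |>.congr
      fun k => by ring)
  filter_upwards [hx.eventually_gt_atTop 1, hpow.eventually_ge_atTop (2 * |z|)] with k hk hz
  have hΓ := Gamma_mul_sub_one_rpow_le_Gamma_add hk hβ
  have hΓk : 0 < Gamma (k * β + c) := Gamma_pos_of_pos (by linarith)
  have hΓkβ : 0 < Gamma (k * β + c + β) := Gamma_pos_of_pos (by linarith)
  have hsucc : ((k + 1 : ℕ) : ℝ) * β + c = k * β + c + β := by push_cast; ring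
  rw [hsucc, norm_div, norm_div, norm_pow, norm_pow, pow_succ, Real.norm_of_nonneg hΓk.le,
    Real.norm_of_nonneg hΓkβ.le, Real.norm_eq_abs, div_le_iff₀ hΓkβ]
  calc |z| ^ k * |z|
      = 1 / 2 * (|z| ^ k / Gamma (k * β + c)) * (Gamma (k * β + c) * (2 * |z|)) := by
        field_simp
    _ ≤ 1 / 2 * (|z| ^ k / Gamma (k * β + c)) * Gamma (k * β + c + β) := by
        gcongr
        exact (mul_le_mul_of_nonneg_left hz hΓk.le).trans hΓ

theorem integral_sub_rpow_mul_rpow {a b t : ℝ} (ha : 0 < a) (hb : 0 < b) (ht : 0 < t) :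
    ∫ s in 0..t, (t - s) ^ (b - 1) * s ^ (a - 1) =
      Gamma a * Gamma b / Gamma (a + b) * t ^ (a + b - 1) := by
  apply Complex.ofReal_injective
  have hcongr : EqOn (fun s : ℝ => (((t - s) ^ (b - 1) * s ^ (a - 1) : ℝ) : ℂ))
      (fun s : ℝ => (s : ℂ) ^ ((a : ℂ) - 1) * ((t : ℂ) - s) ^ ((b : ℂ) - 1)) (uIcc 0 t) := by
    intro s hs
    rw [uIcc_of_le ht.le] at hs
    simp only
    rw [Complex.ofReal_mul, Complex.ofReal_cpow (by linarith [hs.2]),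
      Complex.ofReal_cpow hs.1, mul_comm]
    push_cast
    rfl
  rw [← intervalIntegral.integral_ofReal, intervalIntegral.integral_congr hcongr,
    Complex.betaIntegral_scaled _ _ ht,
    Complex.betaIntegral_eq_Gamma_mul_div _ _ (by simpa using ha) (by simpa using hb)]
  push_cast
  rw [Complex.ofReal_cpow ht.le, ← Complex.ofReal_add, Complex.Gamma_ofReal, Complex.Gamma_ofReal,
    Complex.Gamma_ofReal]
  push_cast
  ring

theorem intervalIntegrable_sub_rpow_mul_rpow {a b t : ℝ} (ha : 0 < a) (hb : 0 < b) (ht : 0 < t) :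
    IntervalIntegrable (fun s => (t - s) ^ (b - 1) * s ^ (a - 1)) volume 0 t := by
  refine intervalIntegral.intervalIntegrable_of_integral_ne_zero ?_
  rw [integral_sub_rpow_mul_rpow ha hb ht]
  have := Gamma_pos_of_pos ha
  have := Gamma_pos_of_pos hb
  have := Gamma_pos_of_pos (add_pos ha hb)
  positivity

section MittagLefflerTerm

variable {β t : ℝ} (γ : ℝ) (k : ℕ)

theorem sub_rpow_mul_pow_div_Gamma_eqOn :
    EqOn (fun s => (t - s) ^ (β - 1) * ((γ * s ^ β) ^ k / Gamma (k * β + 1)))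
      (fun s => γ ^ k / Gamma (k * β + 1) * ((t - s) ^ (β - 1) * s ^ (k * β + 1 - 1)))
      (Ici 0) := by
  intro s hs
  simp only
  rw [mul_pow, ← rpow_natCast (s ^ β), ← rpow_mul hs, add_sub_cancel_right, mul_comm β]
  ring

theorem intervalIntegrable_sub_rpow_mul_pow_div_Gamma (hβ : 0 < β) (ht : 0 < t) :
    IntervalIntegrable (fun s => (t - s) ^ (β - 1) * ((γ * s ^ β) ^ k / Gamma (k * β + 1)))
      volume 0 t :=
  ((intervalIntegrable_sub_rpow_mul_rpow (a := k * β + 1) (by positivity) hβ ht).const_mul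
    _).congr fun s hs => (sub_rpow_mul_pow_div_Gamma_eqOn γ k
      (by rw [uIoc_of_le ht.le] at hs; exact hs.1.le : s ∈ Ici 0)).symm

theorem integral_sub_rpow_mul_pow_div_Gamma (hβ : 0 < β) (ht : 0 < t) :
    ∫ s in 0..t, (t - s) ^ (β - 1) * ((γ * s ^ β) ^ k / Gamma (k * β + 1)) =
      Gamma β * t ^ β * ((γ * t ^ β) ^ k / Gamma (k * β + (β + 1))) := by
  have hk : 0 < (k : ℝ) * β + 1 := by positivity
  rw [intervalIntegral.integral_congr fun s hs => sub_rpow_mul_pow_div_Gamma_eqOn γ k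
      (by rw [uIcc_of_le ht.le] at hs; exact hs.1 : s ∈ Ici 0),
    intervalIntegral.integral_const_mul, integral_sub_rpow_mul_rpow hk hβ ht, mul_pow,
    ← rpow_natCast (t ^ β), ← rpow_mul ht.le, show (k : ℝ) * β + 1 + β - 1 = β * k + β by ring,
    show (k : ℝ) * β + 1 + β = k * β + (β + 1) by ring, rpow_add ht]
  field_simp [(Gamma_pos_of_pos hk).ne']

end MittagLefflerTerm

theorem mul_integral_sub_rpow_mul_mittagLeffler {β t : ℝ} (hβ : 0 < β) (ht : 0 < t) (γ : ℝ) :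
    γ / Gamma β * ∫ s in 0..t, (t - s) ^ (β - 1) * mittagLeffler β (γ * s ^ β) =
      mittagLeffler β (γ * t ^ β) - 1 := by
  set term : ℝ → ℕ → ℝ → ℝ := fun γ k s =>
    (t - s) ^ (β - 1) * ((γ * s ^ β) ^ k / Gamma (k * β + 1)) with hterm
  have hIoc (γ : ℝ) (k : ℕ) :
      ∫ s in Ioc 0 t, term γ k s =
        Gamma β * t ^ β * ((γ * t ^ β) ^ k / Gamma (k * β + (β + 1))) := by
    rw [← intervalIntegral.integral_of_le ht.le, integral_sub_rpow_mul_pow_div_Gamma γ k hβ ht]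
  have hnorm (k : ℕ) : ∫ s in Ioc 0 t, ‖term γ k s‖ = ∫ s in Ioc 0 t, term |γ| k s := by
    refine setIntegral_congr_fun measurableSet_Ioc fun s hs => ?_
    simp only [hterm, norm_mul, norm_div, norm_pow, Real.norm_eq_abs]
    rw [abs_of_nonneg (rpow_nonneg (sub_nonneg.2 hs.2) _), abs_of_nonneg (rpow_nonneg hs.1.le _),
      abs_of_pos (Gamma_pos_of_pos (by positivity))]
  have hsum := hasSum_integral_of_summable_integral_norm (μ := volume.restrict (Ioc 0 t))
    (F := term γ)
    (fun k => (intervalIntegrable_iff_integrableOn_Ioc_of_le ht.le).1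
      (intervalIntegrable_sub_rpow_mul_pow_div_Gamma γ k hβ ht))
    (by simpa only [hnorm, hIoc] using
      (summable_pow_div_Gamma_mul_add hβ (β + 1) (|γ| * t ^ β)).mul_left (Gamma β * t ^ β))
  have htsum (s : ℝ) : ∑' k, term γ k s = (t - s) ^ (β - 1) * mittagLeffler β (γ * s ^ β) :=
    tsum_mul_left
  simp only [hIoc, htsum, ← intervalIntegral.integral_of_le ht.le] at hsum
  have hshift := (hasSum_nat_add_iff' 1).2
    (summable_pow_div_Gamma_mul_add hβ 1 (γ * t ^ β)).hasSum
  rw [Finset.sum_range_one, pow_zero, Nat.cast_zero, zero_mul, zero_add, Gamma_one, div_one]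
    at hshift
  have hcoeff (k : ℕ) : (γ * t ^ β) ^ (k + 1) / Gamma (((k + 1 : ℕ) : ℝ) * β + 1) =
      γ / Gamma β * (Gamma β * t ^ β * ((γ * t ^ β) ^ k / Gamma (k * β + (β + 1)))) := by
    rw [pow_succ, Nat.cast_succ, show ((k : ℝ) + 1) * β + 1 = k * β + (β + 1) by ring]
    field_simp [(Gamma_pos_of_pos hβ).ne']
  simp only [hcoeff] at hshift
  exact (hsum.mul_left (γ / Gamma β)).unique hshift

theorem mittagLeffler_integral_le_general (α γ t : ℝ) (hα : 1 / 2 < α) (ht : 0 < t) :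
    γ / Real.Gamma (2 * α - 1) *
        ∫ s in (0 : ℝ)..t,
          (t - s) ^ (2 * α - 2) * mittagLeffler (2 * α - 1) (γ * s ^ (2 * α - 1)) ≤
      mittagLeffler (2 * α - 1) (γ * t ^ (2 * α - 1)) := by
  rw [show 2 * α - 2 = 2 * α - 1 - 1 by ring,
    mul_integral_sub_rpow_mul_mittagLeffler (by linarith : 0 < 2 * α - 1) ht γ]
  linarith

/-- **Statement 0** (Lemma 2.6, inequality form): for `1/2 < α < 1`, `γ > 0` and `t > 0`,
`(γ / Γ(2α−1)) ∫₀ᵗ (t−s)^{2α−2} E_{2α−1}(γ s^{2α−1}) ds ≤ E_{2α−1}(γ t^{2α−1})`. -/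
theorem mittagLeffler_integral_le (α γ t : ℝ) (hα : 1 / 2 < α) (hα' : α < 1)
    (hγ : 0 < γ) (ht : 0 < t) :
    γ / Real.Gamma (2 * α - 1) *
        ∫ s in (0 : ℝ)..t,
          (t - s) ^ (2 * α - 2) * mittagLeffler (2 * α - 1) (γ * s ^ (2 * α - 1)) ≤
      mittagLeffler (2 * α - 1) (γ * t ^ (2 * α - 1)) :=
  mittagLeffler_integral_le_general α γ t hα ht
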